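/- arXiv:1703.03968 — 3 statements merged into one kernel-verified Lean document; each statement's English description precedes it below -/
import Mathlib

section
/- For any non-negative integers a and b with b ≤ a, there is no integer s such that 2^b · s² + 2^(a+1) ≡ 0 (mod 2^(a+4)). Equivalently, the congruence 2^b s² ≡ -2^(a+1) (mod 2^(a+4)) has no solutions. -/
/-! If `s` were a solution, then `2 ^ b * s ^ 2 = 2 ^ (a + 1) * d` with `d ≡ 7 [ZMOD 8]`, so `d`
is odd. Comparing odd parts of both sides, `d` is the square of the odd part of `s`; but `7` is
not a square modulo `8`. -/

theorem pow_mul_eq_pow_mul_of_not_dvd {α : Type*} [CommMonoidWithZero α] [IsCancelMulZero α]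
    {p u v : α} {i j : ℕ} (hp : p ≠ 0) (hu : ¬ p ∣ u) (hv : ¬ p ∣ v) (h : p ^ i * u = p ^ j * v) :
    i = j ∧ u = v := by
  wlog hij : i ≤ j generalizing i j u v
  · exact (this hv hu h.symm (le_of_not_ge hij)).imp Eq.symm Eq.symm
  obtain ⟨l, rfl⟩ := Nat.exists_eq_add_of_le hij
  rw [pow_add, mul_assoc] at h
  have huv : u = p ^ l * v := mul_left_cancel₀ (pow_ne_zero i hp) h
  cases l with
  | zero => simpa using huv
  | succ l => exact absurd ⟨p ^ l * v, by rw [huv, pow_succ', mul_assoc]⟩ hu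

theorem Int.sq_not_modEq_seven_eight (m : ℤ) : ¬ m ^ 2 ≡ 7 [ZMOD 8] := by
  intro h
  have h8 := (ZMod.intCast_eq_intCast_iff (m ^ 2) 7 8).mpr h
  push_cast at h8
  generalize (m : ZMod 8) = x at h8
  revert x
  decide

theorem Int.two_pow_mul_sq_ne_two_pow_mul (n e : ℕ) (s : ℤ) {d : ℤ} (hd : d ≡ 7 [ZMOD 8]) :
    2 ^ n * s ^ 2 ≠ 2 ^ e * d := by
  intro h
  have hd_odd : ¬ (2 : ℤ) ∣ d := by
    rw [Int.ModEq] at hd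
    omega
  have hs : s ≠ 0 := by
    rintro rfl
    have hd0 : d = 0 := by simpa using h.symm
    exact hd_odd (hd0 ▸ dvd_zero 2)
  obtain ⟨m, hsm, hm⟩ := (Int.finiteMultiplicity_iff.mpr
    ⟨by norm_num, hs⟩ : FiniteMultiplicity (2 : ℤ) s).exists_eq_pow_mul_and_not_dvd
  generalize multiplicity (2 : ℤ) s = k at hsm
  have hm_sq : ¬ (2 : ℤ) ∣ m ^ 2 := fun h2 => hm (Int.prime_two.dvd_of_dvd_pow h2)
  have h' : 2 ^ (n + 2 * k) * m ^ 2 = 2 ^ e * d := by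
    rw [← h, hsm]; ring
  obtain ⟨-, rfl⟩ := pow_mul_eq_pow_mul_of_not_dvd two_ne_zero hm_sq hd_odd h'
  exact Int.sq_not_modEq_seven_eight m hd

theorem no_solution_two_pow_congruence_general (a b : ℕ) :
    ¬ ∃ s : ℤ, (2 ^ (a + 4) : ℤ) ∣ (2 ^ b * s ^ 2 + 2 ^ (a + 1)) := by
  rintro ⟨s, q, hq⟩
  have hd : 8 * q - 1 ≡ 7 [ZMOD 8] := by
    rw [Int.ModEq]
    omega
  exact Int.two_pow_mul_sq_ne_two_pow_mul b (a + 1) s hd (by linear_combination hq)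

/-- For any non-negative integers `a` and `b` with `b ≤ a`, there is no integer `s` such that
`2^b * s² + 2^(a+1) ≡ 0 (mod 2^(a+4))`. -/
theorem no_solution_two_pow_congruence (a b : ℕ) (hba : b ≤ a) :
    ¬ ∃ s : ℤ, (2 ^ (a + 4) : ℤ) ∣ (2 ^ b * s ^ 2 + 2 ^ (a + 1)) :=
  no_solution_two_pow_congruence_general a b
end

section
/- Let p be an odd prime, G = SL₂(Z/p²Z)/{±I}, and B the image in G of the subgroup of matrices (a b; c d) with c ≡ 0 (mod p²). Then the number of double cosets B\G/B equals 4. -/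
open Matrix

/-- The subgroup `Γ₀(p²)` of `SL₂(ℤ/p²ℤ)`: matrices whose lower-left entry is `0`. -/
def BorelSubgroup (n : ℕ) : Subgroup (Matrix.SpecialLinearGroup (Fin 2) (ZMod n)) where
  carrier := {A | A.1 1 0 = 0}
  one_mem' := by simp [Matrix.SpecialLinearGroup.coe_one, Matrix.one_apply]
  mul_mem' := by
    intro A B hA hB
    simp only [Set.mem_setOf_eq] at *
    simp [Matrix.SpecialLinearGroup.coe_mul, Matrix.mul_apply, Fin.sum_univ_two, hA, hB]
  inv_mem' := by
    intro A hA
    simp only [Set.mem_setOf_eq] at *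
    simp [Matrix.SpecialLinearGroup.coe_inv, Matrix.adjugate_fin_two, hA]

/-- The central subgroup `{±I}` of `SL₂(ℤ/nℤ)`. -/
def pmOne (n : ℕ) : Subgroup (Matrix.SpecialLinearGroup (Fin 2) (ZMod n)) :=
  Subgroup.zpowers (-1)

instance pmOne_normal (n : ℕ) : (pmOne n).Normal := by
  constructor
  intro x hx g
  obtain ⟨k, rfl⟩ := Subgroup.mem_zpowers_iff.mp hx
  have hc : Commute g (-1 : Matrix.SpecialLinearGroup (Fin 2) (ZMod n)) := by
    unfold Commute SemiconjBy
    ext i j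
    simp [Matrix.SpecialLinearGroup.coe_mul]
  have : g * (-1) ^ k * g⁻¹ = (-1) ^ k := by
    rw [(hc.zpow_right k).eq, mul_assoc, mul_inv_cancel, mul_one]
  rw [this]
  exact Subgroup.mem_zpowers_iff.mpr ⟨k, rfl⟩

/-- `G = SL₂(ℤ/p²ℤ)/{±I}`. -/
def PSLmod (n : ℕ) : Type := Matrix.SpecialLinearGroup (Fin 2) (ZMod n) ⧸ pmOne n

instance (n : ℕ) : Group (PSLmod n) := QuotientGroup.Quotient.group _

/-- The image `B` of `Γ₀(p²)` in `G = SL₂(ℤ/p²ℤ)/{±I}`. -/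
def BorelImage (n : ℕ) : Subgroup (PSLmod n) :=
  (BorelSubgroup n).map (QuotientGroup.mk' (pmOne n))

/-!
Since `-1` lies in the upper triangular subgroup `B₀` of `SL₂(ℤ/p²)`, the double cosets `B\G/B`
are those of `B₀\SL₂(ℤ/p²)/B₀`. Multiplying `g = (a b; c d)` on both sides by elements of `B₀`
multiplies `c` by units, so it is an invariant whether `c` is `0`, a unit, or `p v` with `v` a
unit; in the last case `a d ≡ 1 (mod p)`, and `a v mod p` gets multiplied by a nonzero square, so
its square class is a further invariant. The four resulting classes contain `1`, `(0 -1; 1 0)`,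
`(1 0; p 1)` and `(1 0; p n 1)` with `n` a nonsquare mod `p`, and every `g` lies in the double
coset of one of these.
-/

open scoped MatrixGroups

namespace DoubleCoset

variable {G G' α : Type*} [Group G] [Group G'] {H K : Subgroup G}

theorem pred_mul_mul_iff {P : G → Prop} (hP : ∀ h ∈ H, ∀ k ∈ K, ∀ g, P g → P (h * g * k))
    {h k : G} (hh : h ∈ H) (hk : k ∈ K) (g : G) : P (h * g * k) ↔ P g :=
  ⟨fun hg => by simpa [mul_assoc] using hP h⁻¹ (inv_mem hh) k⁻¹ (inv_mem hk) _ hg,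
    hP h hh k hk g⟩

theorem card_quotient_eq_card_of_invariant (rep : α → G) (f : G → α)
    (hf : ∀ h ∈ H, ∀ k ∈ K, ∀ g, f (h * g * k) = f g) (hrep : Function.LeftInverse f rep)
    (hcover : ∀ g, ∃ a, ∃ h ∈ H, ∃ k ∈ K, g = h * rep a * k) :
    Nat.card (Quotient (H : Set G) K) = Nat.card α := by
  refine (Nat.card_congr (Equiv.ofBijective (fun a => mk H K (rep a)) ⟨?_, ?_⟩)).symm
  · intro a b hab
    obtain ⟨h, hh, k, hk, hba⟩ := (eq H K _ _).mp hab
    rw [← hrep a, ← hrep b, hba, hf h hh k hk]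
  · intro q
    obtain ⟨a, h, hh, k, hk, hq⟩ := hcover q.out
    exact ⟨a, ((eq H K _ _).mpr ⟨h, hh, k, hk, hq⟩).trans (out_eq' H K q)⟩

theorem card_quotient_map_eq {f : G →* G'} (hf : Function.Surjective f) (hker : f.ker ≤ K) :
    Nat.card (Quotient ((H.map f : Subgroup G') : Set G') (K.map f)) =
      Nat.card (Quotient (H : Set G) K) := by
  symm
  refine Nat.card_congr (Equiv.ofBijective
    (Quotient.map' f fun a b hab => ?_) ⟨fun x y hxy => ?_, fun y => ?_⟩)
  · obtain ⟨h, hh, k, hk, rfl⟩ := rel_iff.mp hab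
    exact rel_iff.mpr ⟨f h, H.mem_map_of_mem f hh, f k, K.mem_map_of_mem f hk, by simp⟩
  · induction x using Quotient.inductionOn' with | h a => ?_
    induction y using Quotient.inductionOn' with | h b => ?_
    obtain ⟨_, ⟨h, hh, rfl⟩, _, ⟨k, hk, rfl⟩, hb⟩ := rel_iff.mp (Quotient.exact' hxy)
    have hz : (h * a * k)⁻¹ * b ∈ f.ker := by
      rw [MonoidHom.mem_ker, map_mul, map_inv, hb, map_mul, map_mul, inv_mul_cancel]
    refine Quotient.sound'
      (rel_iff.mpr ⟨h, hh, k * ((h * a * k)⁻¹ * b), K.mul_mem hk (hker hz), ?_⟩)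
    group
  · induction y using Quotient.inductionOn' with | h b => ?_
    obtain ⟨a, rfl⟩ := hf b
    exact ⟨Quotient.mk'' a, rfl⟩

end DoubleCoset

theorem FiniteField.isSquare_mul_of_not_isSquare {F : Type*} [Field F] [Fintype F] {a b : F}
    (ha : ¬IsSquare a) (hb : ¬IsSquare b) : IsSquare (a * b) := by
  classical
  have ha0 : a ≠ 0 := by rintro rfl; exact ha IsSquare.zero
  have hb0 : b ≠ 0 := by rintro rfl; exact hb IsSquare.zero
  rw [← quadraticChar_one_iff_isSquare (mul_ne_zero ha0 hb0), map_mul,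
    quadraticChar_neg_one_iff_not_isSquare.mpr ha, quadraticChar_neg_one_iff_not_isSquare.mpr hb]
  norm_num

namespace ZMod

abbrev modP (p : ℕ) : ZMod (p ^ 2) →+* ZMod p := castHom (dvd_pow_self p two_ne_zero) (ZMod p)

theorem natCast_self_mul_natCast_self (p : ℕ) : (p : ZMod (p ^ 2)) * p = 0 := by
  rw [← Nat.cast_mul, ← sq, natCast_self]

variable {p : ℕ} [Fact p.Prime]

theorem modP_eq_zero_iff {x : ZMod (p ^ 2)} : modP p x = 0 ↔ ∃ y, x = p * y := by
  refine ⟨fun hx => ?_, by rintro ⟨y, rfl⟩; simp⟩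
  rw [← natCast_zmod_val x, map_natCast, natCast_eq_zero_iff] at hx
  obtain ⟨k, hk⟩ := hx
  exact ⟨k, by rw [← natCast_zmod_val x, hk, Nat.cast_mul]⟩

theorem natCast_self_mul_eq_zero_iff {x : ZMod (p ^ 2)} :
    (p : ZMod (p ^ 2)) * x = 0 ↔ modP p x = 0 := by
  refine ⟨fun hx => ?_, fun hx => ?_⟩
  · rw [← natCast_zmod_val x, ← Nat.cast_mul, natCast_eq_zero_iff] at hx
    rw [← natCast_zmod_val x, map_natCast, natCast_eq_zero_iff]
    generalize x.val = m at hx ⊢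
    rw [sq] at hx
    exact Nat.dvd_of_mul_dvd_mul_left (Fact.out : p.Prime).pos hx
  · obtain ⟨y, rfl⟩ := modP_eq_zero_iff.mp hx
    rw [← mul_assoc, natCast_self_mul_natCast_self p, zero_mul]

theorem isUnit_iff_modP_ne_zero {x : ZMod (p ^ 2)} : IsUnit x ↔ modP p x ≠ 0 := by
  rw [← natCast_zmod_val x, isUnit_iff_coprime, map_natCast, Ne, natCast_eq_zero_iff,
    Nat.coprime_pow_right_iff two_pos, Nat.coprime_comm, Nat.Prime.coprime_iff_not_dvd Fact.out]

theorem exists_unit_modP_eq {s : ZMod p} (hs : s ≠ 0) :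
    ∃ u : (ZMod (p ^ 2))ˣ, modP p u = s := by
  obtain ⟨x, rfl⟩ := castHom_surjective (dvd_pow_self p two_ne_zero) s
  exact ⟨(isUnit_iff_modP_ne_zero.mpr hs).unit, rfl⟩

end ZMod

open ZMod

namespace Matrix.SpecialLinearGroup

variable {R : Type*} [CommRing R]

theorem mul_apply_fin_two (A B : SL(2, R)) (i j : Fin 2) :
    (A * B) i j = A i 0 * B 0 j + A i 1 * B 1 j := by
  rw [coe_mul, mul_apply, Fin.sum_univ_two]

theorem apply_zero_zero_mul_apply_one_one {t : SL(2, R)} (ht : t 1 0 = 0) :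
    t 0 0 * t 1 1 = 1 := by
  have := t.det_coe
  rwa [det_fin_two, ht, mul_zero, sub_zero] at this

theorem mul_mul_apply_one_zero {t s : SL(2, R)} (ht : t 1 0 = 0) (hs : s 1 0 = 0) (g : SL(2, R)) :
    (t * g * s) 1 0 = t 1 1 * g 1 0 * s 0 0 := by
  simp only [mul_apply_fin_two, ht, hs]; ring

theorem mul_mul_apply_zero_zero {s : SL(2, R)} (hs : s 1 0 = 0) (t g : SL(2, R)) :
    (t * g * s) 0 0 = (t 0 0 * g 0 0 + t 0 1 * g 1 0) * s 0 0 := by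
  simp only [mul_apply_fin_two, hs]; ring

def upperTriangular (u : Rˣ) (b : R) : SL(2, R) :=
  ⟨!![(u : R), b; 0, ↑u⁻¹], by simp⟩

def lowerUnipotent (q : R) : SL(2, R) :=
  ⟨!![1, 0; q, 1], by simp⟩

def weylElement : SL(2, R) :=
  ⟨!![0, -1; 1, 0], by simp⟩

@[simp] theorem coe_upperTriangular (u : Rˣ) (b : R) :
    (upperTriangular u b : Matrix (Fin 2) (Fin 2) R) = !![(u : R), b; 0, ↑u⁻¹] := rfl

@[simp] theorem coe_lowerUnipotent (q : R) :
    (lowerUnipotent q : Matrix (Fin 2) (Fin 2) R) = !![1, 0; q, 1] := rfl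

@[simp] theorem coe_weylElement :
    ((weylElement : SL(2, R)) : Matrix (Fin 2) (Fin 2) R) = !![0, -1; 1, 0] := rfl

end Matrix.SpecialLinearGroup

open Matrix.SpecialLinearGroup

namespace BorelSubgroup

section

variable {m : ℕ}

theorem mem_iff {g : SL(2, ZMod m)} : g ∈ BorelSubgroup m ↔ g 1 0 = 0 := Iff.rfl

theorem upperTriangular_mem (u : (ZMod m)ˣ) (b : ZMod m) :
    upperTriangular u b ∈ BorelSubgroup m := by
  rw [mem_iff]; simp

theorem exists_mul_weylElement_mul {g : SL(2, ZMod m)} (hc : IsUnit (g 1 0)) :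
    ∃ t ∈ BorelSubgroup m, ∃ s ∈ BorelSubgroup m, g = t * weylElement * s := by
  obtain ⟨c, hc⟩ := hc
  -- `s` is chosen so that the bottom row of `g * s⁻¹` is `(1, 0)`
  refine ⟨g * (upperTriangular c (g 1 1))⁻¹ * weylElement⁻¹, ?_, _,
    upperTriangular_mem c (g 1 1), by group⟩
  rw [mem_iff]
  simp only [mul_apply_fin_two, ← hc, coe_inv, coe_upperTriangular, adjugate_fin_two_of, of_apply,
    cons_val', cons_val_zero, cons_val_fin_one, Units.mul_inv, cons_val_one, coe_weylElement]
  ring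

end

variable {p : ℕ}

theorem modP_apply_zero_zero_mul_modP_apply_one_one {g : SL(2, ZMod (p ^ 2))}
    (hc : modP p (g 1 0) = 0) : modP p (g 0 0) * modP p (g 1 1) = 1 := by
  have := congrArg (modP p) g.det_coe
  rwa [det_fin_two, map_sub, map_mul, map_mul, hc, mul_zero, sub_zero, map_one] at this

def HasSquareResidue (p : ℕ) (g : SL(2, ZMod (p ^ 2))) : Prop :=
  ∃ v, g 1 0 = (p : ZMod (p ^ 2)) * v ∧ IsSquare (modP p (g 0 0 * v))

open Classical in
noncomputable def cell (p : ℕ) (g : SL(2, ZMod (p ^ 2))) : Fin 4 :=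
  if g 1 0 = 0 then 0 else if IsUnit (g 1 0) then 1 else if HasSquareResidue p g then 2 else 3

def cellRep (p : ℕ) (n : ZMod (p ^ 2)) : Fin 4 → SL(2, ZMod (p ^ 2)) :=
  ![1, weylElement, lowerUnipotent p, lowerUnipotent (p * n)]

theorem hasSquareResidue_mul_mul {t s : SL(2, ZMod (p ^ 2))} (ht : t 1 0 = 0) (hs : s 1 0 = 0)
    {g : SL(2, ZMod (p ^ 2))} (hg : HasSquareResidue p g) : HasSquareResidue p (t * g * s) := by
  obtain ⟨v, hc, r, hr⟩ := hg
  refine ⟨t 1 1 * v * s 0 0, ?_, r * modP p (s 0 0), ?_⟩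
  · rw [mul_mul_apply_one_zero ht hs, hc]; ring
  · have htt := congrArg (modP p) (apply_zero_zero_mul_apply_one_one ht)
    simp only [map_mul, map_one] at hr htt
    rw [mul_mul_apply_zero_zero hs, hc]
    simp only [map_mul, map_add, map_natCast, CharP.cast_eq_zero, zero_mul, mul_zero, add_zero]
    linear_combination (modP p (s 0 0)) ^ 2 * hr
      + (modP p (g 0 0) * modP p v * modP p (s 0 0) ^ 2) * htt

theorem cell_mul_mul {t s : SL(2, ZMod (p ^ 2))} (ht : t ∈ BorelSubgroup (p ^ 2))
    (hs : s ∈ BorelSubgroup (p ^ 2)) (g : SL(2, ZMod (p ^ 2))) :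
    cell p (t * g * s) = cell p g := by
  have hzero : (t * g * s) 1 0 = 0 ↔ g 1 0 = 0 :=
    DoubleCoset.pred_mul_mul_iff (P := fun g : SL(2, ZMod (p ^ 2)) => g 1 0 = 0)
      (fun t ht s hs g hg => by rw [mul_mul_apply_one_zero ht hs, hg, mul_zero, zero_mul]) ht hs g
  have hunit : IsUnit ((t * g * s) 1 0) ↔ IsUnit (g 1 0) :=
    DoubleCoset.pred_mul_mul_iff (P := fun g : SL(2, ZMod (p ^ 2)) => IsUnit (g 1 0))
      (fun t ht s hs g hg => by
        rw [mul_mul_apply_one_zero ht hs]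
        exact ((IsUnit.of_mul_eq_one_right _ (apply_zero_zero_mul_apply_one_one ht)).mul hg).mul
          (IsUnit.of_mul_eq_one _ (apply_zero_zero_mul_apply_one_one hs))) ht hs g
  have hsq : HasSquareResidue p (t * g * s) ↔ HasSquareResidue p g :=
    DoubleCoset.pred_mul_mul_iff (fun _ ht _ hs _ => hasSquareResidue_mul_mul ht hs) ht hs g
  classical
  exact if_congr hzero rfl (if_congr hunit rfl (if_congr hsq rfl rfl))

variable [Fact p.Prime]

theorem exists_mul_lowerUnipotent_mul {g : SL(2, ZMod (p ^ 2))} {v e : ZMod (p ^ 2)}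
    {γ : (ZMod (p ^ 2))ˣ} (hc : g 1 0 = (p : ZMod (p ^ 2)) * v)
    (hγ : modP p (g 0 0 * v) = modP p (e * (γ : ZMod (p ^ 2)) ^ 2)) :
    ∃ t ∈ BorelSubgroup (p ^ 2), ∃ s ∈ BorelSubgroup (p ^ 2),
      g = t * lowerUnipotent ((p : ZMod (p ^ 2)) * e) * s := by
  refine ⟨g * (upperTriangular γ 0)⁻¹ * (lowerUnipotent ((p : ZMod (p ^ 2)) * e))⁻¹, ?_, _,
    upperTriangular_mem γ 0, by group⟩
  have had := modP_apply_zero_zero_mul_modP_apply_one_one (g := g) (by simp [hc])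
  have hγ' : modP p (γ⁻¹ : (ZMod (p ^ 2))ˣ) * modP p γ = 1 := by
    rw [← map_mul, Units.inv_mul, map_one]
  rw [mem_iff]
  -- the lower-left entry of `t` is `p (v γ⁻¹ - d e γ)`, and `v ≡ d e γ² (mod p)` since `a d ≡ 1`
  simp only [mul_apply_fin_two, hc, coe_inv, coe_upperTriangular, adjugate_fin_two_of, neg_zero,
    of_apply, cons_val', cons_val_zero, cons_val_fin_one, cons_val_one, mul_zero, add_zero,
    coe_lowerUnipotent, mul_one, zero_add, mul_neg]
  have key : modP p (v * ↑γ⁻¹ - g 1 1 * e * γ) = 0 := by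
    simp only [map_mul, map_sub, map_pow] at hγ ⊢
    linear_combination (modP p ↑γ⁻¹ * modP p (g 1 1)) * hγ - (modP p ↑γ⁻¹ * modP p v) * had
      + (modP p (g 1 1) * modP p e * modP p γ) * hγ'
  linear_combination natCast_self_mul_eq_zero_iff.mpr key

theorem cell_cellRep {n : ZMod (p ^ 2)} (hn : ¬IsSquare (modP p n)) :
    Function.LeftInverse (cell p) (cellRep p n) := by
  have hn0 : modP p n ≠ 0 := by rintro h; simp [h] at hn
  have hp0 : (p : ZMod (p ^ 2)) ≠ 0 := by
    simpa using (natCast_self_mul_eq_zero_iff (x := 1)).not.mpr (by simp)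
  have hpn0 : (p : ZMod (p ^ 2)) * n ≠ 0 := natCast_self_mul_eq_zero_iff.not.mpr hn0
  have : Nontrivial (ZMod (p ^ 2)) := ⟨⟨_, _, hp0⟩⟩
  intro i
  fin_cases i
  · simp [cell, cellRep]
  · simp [cell, cellRep]
  · have hsq : HasSquareResidue p (lowerUnipotent p) :=
      ⟨1, (mul_one _).symm, by simp only [coe_lowerUnipotent, of_apply, cons_val', cons_val_zero,
        cons_val_fin_one, mul_one, map_one, IsSquare.one]⟩
    simp [cell, cellRep, hp0, isUnit_iff_modP_ne_zero, hsq]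
  · have hsq : ¬HasSquareResidue p (lowerUnipotent (p * n)) := by
      rintro ⟨v, hv, hsq⟩
      simp only [coe_lowerUnipotent, of_apply, cons_val', cons_val_zero, cons_val_one,
        cons_val_fin_one, one_mul] at hv hsq
      have hnv : modP p (n - v) = 0 :=
        natCast_self_mul_eq_zero_iff.mp (by rw [mul_sub, hv, sub_self])
      rw [map_sub, sub_eq_zero] at hnv
      exact hn (hnv ▸ hsq)
    simp [cell, cellRep, hpn0, isUnit_iff_modP_ne_zero, hsq]

theorem exists_mul_cellRep_mul {n : ZMod (p ^ 2)} (hn : ¬IsSquare (modP p n))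
    (g : SL(2, ZMod (p ^ 2))) :
    ∃ i, ∃ t ∈ BorelSubgroup (p ^ 2), ∃ s ∈ BorelSubgroup (p ^ 2),
      g = t * cellRep p n i * s := by
  by_cases hc0 : g 1 0 = 0
  · exact ⟨0, g, hc0, 1, one_mem _, by simp [cellRep]⟩
  by_cases hcu : IsUnit (g 1 0)
  · exact ⟨1, exists_mul_weylElement_mul hcu⟩
  obtain ⟨v, hv⟩ := modP_eq_zero_iff.mp (not_not.mp (isUnit_iff_modP_ne_zero.not.mp hcu))
  have hv0 : modP p v ≠ 0 := fun h => hc0 (hv.trans (natCast_self_mul_eq_zero_iff.mpr h))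
  have ha0 : modP p (g 0 0) ≠ 0 := left_ne_zero_of_mul_eq_one
    (modP_apply_zero_zero_mul_modP_apply_one_one (by simp [hv]))
  have hav : modP p (g 0 0 * v) ≠ 0 := by rw [map_mul]; exact mul_ne_zero ha0 hv0
  by_cases hsq : IsSquare (modP p (g 0 0 * v))
  · obtain ⟨r, hr⟩ := hsq
    obtain ⟨γ, hγ⟩ := exists_unit_modP_eq (s := r) (by rintro rfl; exact hav (by rw [hr, mul_zero]))
    have := exists_mul_lowerUnipotent_mul (e := 1) (γ := γ) hv
      (by rw [hr, one_mul, map_pow, hγ, sq])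
    exact ⟨2, by simpa [cellRep] using this⟩
  · have hn0 : modP p n ≠ 0 := by rintro h; simp [h] at hn
    obtain ⟨r, hr⟩ := FiniteField.isSquare_mul_of_not_isSquare hsq hn
    have hr0 : r ≠ 0 := by rintro rfl; exact mul_ne_zero hav hn0 (by rw [hr, mul_zero])
    obtain ⟨γ, hγ⟩ := exists_unit_modP_eq (div_ne_zero hr0 hn0)
    refine ⟨3, exists_mul_lowerUnipotent_mul (γ := γ) hv ?_⟩
    rw [map_mul (modP p) n, map_pow, hγ, div_pow, mul_div_assoc',
      eq_div_iff (pow_ne_zero 2 hn0)]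
    linear_combination (modP p n) * hr

theorem card_quotient (hp : p ≠ 2) :
    Nat.card (DoubleCoset.Quotient (BorelSubgroup (p ^ 2) : Set SL(2, ZMod (p ^ 2)))
      (BorelSubgroup (p ^ 2))) = 4 := by
  obtain ⟨r, hr⟩ := FiniteField.exists_nonsquare (F := ZMod p) (by rwa [ZMod.ringChar_zmod_n])
  obtain ⟨n, rfl⟩ := castHom_surjective (dvd_pow_self p two_ne_zero) r
  rw [DoubleCoset.card_quotient_eq_card_of_invariant (cellRep p n) (cell p)
    (fun _ ht _ hs g => cell_mul_mul ht hs g) (cell_cellRep hr) (exists_mul_cellRep_mul hr),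
    Nat.card_eq_fintype_card, Fintype.card_fin]

end BorelSubgroup

/-- For `p` an odd prime, `G = SL₂(ℤ/p²ℤ)/{±I}` and `B` the image in `G` of the subgroup of
matrices with lower-left entry `≡ 0 (mod p²)`, the number of double cosets `B\G/B` is `4`. -/
theorem card_double_cosets_eq_four (p : ℕ) (hp : p.Prime) (hodd : Odd p) :
    Nat.card (DoubleCoset.Quotient ((BorelImage (p ^ 2) : Subgroup (PSLmod (p ^ 2))) : Set (PSLmod (p ^ 2)))
      ((BorelImage (p ^ 2) : Subgroup (PSLmod (p ^ 2))) : Set (PSLmod (p ^ 2)))) = 4 := by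
  have : Fact p.Prime := ⟨hp⟩
  have hker : (QuotientGroup.mk' (pmOne (p ^ 2))).ker ≤ BorelSubgroup (p ^ 2) := by
    rw [QuotientGroup.ker_mk', pmOne, Subgroup.zpowers_le, BorelSubgroup.mem_iff]
    simp
  exact (DoubleCoset.card_quotient_map_eq (QuotientGroup.mk'_surjective _) hker).trans
    (BorelSubgroup.card_quotient (by rintro rfl; norm_num at hodd))
end

section
/- Let p be an odd prime, G = SL₂(Z/p²Z)/{±I}, B the image of Γ₀(p²) in G, and define for x ∈ Z/p²Z and a ∈ Z/pZ the line U_x^a = Span{ Σ_{k mod p} e(−ak/p) u_{x+kp} } inside the permutation module C[G/B], where u_x = (x −1; 1 0)B. Then U_x^a depends only on x mod p, the generator T = (1 1; 0 1) sends U_x^a to U_{x+1}^a, and S = (0 −1; 1 0) sends U_x^a to U_{−x^{−1}}^{a x²} for x invertible. -/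
open Matrix

open Complex

/-- The coset `u_x = (x −1; 1 0)B` in `G/B`, for `G = SL₂(ℤ/p²ℤ)/{±I}` and `B` the image of
`Γ₀(p²)`. -/
def uCoset (p : ℕ) (x : ZMod (p ^ 2)) : PSLmod (p ^ 2) ⧸ BorelImage (p ^ 2) :=
  QuotientGroup.mk (QuotientGroup.mk' (pmOne (p ^ 2))
    ⟨!![x, -1; 1, 0], by rw [Matrix.det_fin_two_of]; ring⟩)

open scoped Classical in
/-- The vector `Σ_{k mod p} e(−ak/p) u_{x+kp}` in the permutation module `ℂ[G/B]`. -/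
noncomputable def wVec (p : ℕ) [Fact p.Prime] (x : ZMod (p ^ 2)) (a : ZMod p) :
    (PSLmod (p ^ 2) ⧸ BorelImage (p ^ 2)) → ℂ :=
  fun c => ∑ k : ZMod p,
    if c = uCoset p (x + (k.val : ZMod (p ^ 2)) * (p : ZMod (p ^ 2))) then
      Complex.exp (-(2 * Real.pi * Complex.I) * (a.val : ℂ) * (k.val : ℂ) / (p : ℂ))
    else 0

/-- The line `U_x^a = Span{Σ_{k mod p} e(−ak/p) u_{x+kp}}` inside `ℂ[G/B]`. -/
noncomputable def Uline (p : ℕ) [Fact p.Prime] (x : ZMod (p ^ 2)) (a : ZMod p) :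
    Submodule ℂ ((PSLmod (p ^ 2) ⧸ BorelImage (p ^ 2)) → ℂ) :=
  Submodule.span ℂ {wVec p x a}

/-- The linear action of `g ∈ G` on the permutation module `ℂ[G/B]`, `(g • f)(c) = f(g⁻¹ • c)`. -/
def actL (p : ℕ) (g : PSLmod (p ^ 2)) :
    ((PSLmod (p ^ 2) ⧸ BorelImage (p ^ 2)) → ℂ) →ₗ[ℂ]
      ((PSLmod (p ^ 2) ⧸ BorelImage (p ^ 2)) → ℂ) where
  toFun := fun f c => f (g⁻¹ • c)
  map_add' := fun _ _ => rfl
  map_smul' := fun _ _ => rfl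

/-- The image of `T = (1 1; 0 1)` in `G`. -/
def Tbar (p : ℕ) : PSLmod (p ^ 2) :=
  QuotientGroup.mk' (pmOne (p ^ 2)) ⟨!![1, 1; 0, 1], by rw [Matrix.det_fin_two_of]; ring⟩

/-- The image of `S = (0 −1; 1 0)` in `G`. -/
def Sbar (p : ℕ) : PSLmod (p ^ 2) :=
  QuotientGroup.mk' (pmOne (p ^ 2)) ⟨!![0, -1; 1, 0], by rw [Matrix.det_fin_two_of]; ring⟩

/-!
Write `kp` (`liftMulSelf p k`) for the image of `k ∈ ℤ/pℤ` in `pℤ/p²ℤ`; the product `u · kp`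
only depends on `u mod p`, and `kp · lp = 0`. The generator of `U_x^a` is the character sum
`Σ_k e(−ak/p) u_{x+kp}` over the fibre of `x`. Each of `1`, `T`, `S` moves the cosets of one
fibre onto those of another fibre, reindexing `k ↦ φ(k)` by an affine bijection of `ℤ/pℤ`: `1`
and `T` translate, and `S` scales by `x̄⁻²`, because `(x + kp)(−x⁻¹ + k x̄⁻² p) = −1` in
`ℤ/p²ℤ`. Such a reindexing multiplies the character sum by a nonzero constant, so it preserves
the line it spans.
-/

namespace ZMod

def liftMulSelf (n : ℕ) (k : ZMod n) : ZMod (n ^ 2) := (k.val : ZMod (n ^ 2)) * n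

variable {n : ℕ} [NeZero n]

omit [NeZero n] in
theorem natCast_mul_self_eq_zero : (n : ZMod (n ^ 2)) * n = 0 := by
  rw [← sq]; exact_mod_cast natCast_self (n ^ 2)

theorem mul_natCast_eq_zero_of_castHom_eq_zero {w : ZMod (n ^ 2)}
    (hw : castHom (dvd_pow_self n two_ne_zero) (ZMod n) w = 0) : w * n = 0 := by
  have hval : ((w.val : ℕ) : ZMod n) = 0 := by
    rwa [castHom_apply, ← natCast_val] at hw
  obtain ⟨c, hc⟩ := (natCast_eq_zero_iff _ _).mp hval
  rw [← natCast_zmod_val w, hc]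
  push_cast
  linear_combination (c : ZMod (n ^ 2)) * natCast_mul_self_eq_zero

theorem liftMulSelf_eq_mul {u : ZMod (n ^ 2)} {k : ZMod n}
    (h : castHom (dvd_pow_self n two_ne_zero) (ZMod n) u = k) : liftMulSelf n k = u * n := by
  have hzero := mul_natCast_eq_zero_of_castHom_eq_zero (w := u - (k.val : ZMod (n ^ 2)))
    (by rw [map_sub, map_natCast, h, natCast_zmod_val, sub_self])
  rw [liftMulSelf]
  linear_combination -hzero

theorem liftMulSelf_add (s t : ZMod n) :
    liftMulSelf n (s + t) = liftMulSelf n s + liftMulSelf n t := by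
  rw [liftMulSelf_eq_mul (u := (s.val : ZMod (n ^ 2)) + (t.val : ZMod (n ^ 2)))
    (by simp only [map_add, map_natCast, natCast_zmod_val]), liftMulSelf, liftMulSelf]
  ring

theorem liftMulSelf_one : liftMulSelf n 1 = n := by
  rw [liftMulSelf_eq_mul (u := 1) (by simp), one_mul]

theorem mul_liftMulSelf (u : ZMod (n ^ 2)) (k : ZMod n) :
    u * liftMulSelf n k = liftMulSelf n (castHom (dvd_pow_self n two_ne_zero) (ZMod n) u * k) := by
  rw [liftMulSelf_eq_mul (k := castHom (dvd_pow_self n two_ne_zero) (ZMod n) u * k)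
    (u := u * (k.val : ZMod (n ^ 2)))
    (by simp only [map_mul, map_natCast, natCast_zmod_val]), liftMulSelf]
  ring

omit [NeZero n] in
theorem liftMulSelf_mul_liftMulSelf (s t : ZMod n) : liftMulSelf n s * liftMulSelf n t = 0 := by
  rw [liftMulSelf, liftMulSelf]
  linear_combination ((s.val : ZMod (n ^ 2)) * (t.val : ZMod (n ^ 2))) * natCast_mul_self_eq_zero

theorem exp_neg_two_pi_I_mul_val_mul_val (a k : ZMod n) :
    exp (-(2 * Real.pi * I) * (a.val : ℂ) * (k.val : ℂ) / (n : ℂ)) = stdAddChar (-(a * k)) := by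
  have hcast : ((-(a.val * k.val : ℤ) : ℤ) : ZMod n) = -(a * k) := by
    push_cast [natCast_val, cast_id]; rfl
  rw [← hcast, stdAddChar_coe]
  push_cast
  ring_nf

theorem stdAddChar_ne_zero (j : ZMod n) : stdAddChar j ≠ 0 := by
  rw [stdAddChar_apply]; exact Circle.coe_ne_zero _

end ZMod

open ZMod

section Action

variable {p : ℕ}

def toPSLmod (n : ℕ) : SpecialLinearGroup (Fin 2) (ZMod n) →* PSLmod n := QuotientGroup.mk' (pmOne n)

theorem toPSLmod_smul_uCoset_of_mul_eq {g : SpecialLinearGroup (Fin 2) (ZMod (p ^ 2))}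
    {y z : ZMod (p ^ 2)} (b : SpecialLinearGroup (Fin 2) (ZMod (p ^ 2)))
    (hb : b ∈ BorelSubgroup (p ^ 2))
    (h : (g : Matrix (Fin 2) (Fin 2) (ZMod (p ^ 2))) * !![y, -1; 1, 0] =
      !![z, -1; 1, 0] * (b : Matrix (Fin 2) (Fin 2) (ZMod (p ^ 2)))) :
    toPSLmod (p ^ 2) g • uCoset p y = uCoset p z := by
  let My : SpecialLinearGroup (Fin 2) (ZMod (p ^ 2)) := ⟨!![y, -1; 1, 0], by simp⟩
  let Mz : SpecialLinearGroup (Fin 2) (ZMod (p ^ 2)) := ⟨!![z, -1; 1, 0], by simp⟩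
  have hgy : g * My = Mz * b := Subtype.ext h
  show (QuotientGroup.mk (toPSLmod (p ^ 2) g * toPSLmod (p ^ 2) My) : _ ⧸ BorelImage (p ^ 2)) =
    QuotientGroup.mk (toPSLmod (p ^ 2) Mz)
  rw [← map_mul, hgy, map_mul]
  exact QuotientGroup.mk_mul_of_mem _ (Subgroup.mem_map_of_mem _ hb)

theorem Tbar_smul_uCoset (y : ZMod (p ^ 2)) : Tbar p • uCoset p y = uCoset p (y + 1) :=
  toPSLmod_smul_uCoset_of_mul_eq 1 (one_mem _) (by simp)

theorem Sbar_smul_uCoset {y z : ZMod (p ^ 2)} (h : y * z = -1) :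
    Sbar p • uCoset p y = uCoset p z :=
  toPSLmod_smul_uCoset_of_mul_eq ⟨!![y, -1; 0, -z], by simp; linear_combination -h⟩ rfl
    (by simp; linear_combination -h)

theorem actL_apply (g : PSLmod (p ^ 2)) (f : PSLmod (p ^ 2) ⧸ BorelImage (p ^ 2) → ℂ)
    (c : PSLmod (p ^ 2) ⧸ BorelImage (p ^ 2)) : actL p g f c = f (g⁻¹ • c) := rfl

theorem actL_one : actL p 1 = LinearMap.id := by
  ext f c; simp [actL_apply]

end Action

section Uline

variable {p : ℕ} [Fact p.Prime]

open scoped Classical in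
theorem wVec_apply (x : ZMod (p ^ 2)) (a : ZMod p) (c : PSLmod (p ^ 2) ⧸ BorelImage (p ^ 2)) :
    wVec p x a c = ∑ k : ZMod p,
      if c = uCoset p (x + liftMulSelf p k) then stdAddChar (-(a * k)) else 0 := by
  simp only [wVec, exp_neg_two_pi_I_mul_val_mul_val, liftMulSelf]
  rfl

theorem map_actL_Uline {g : PSLmod (p ^ 2)} {x x' : ZMod (p ^ 2)} {a a' b : ZMod p}
    (φ : ZMod p ≃ ZMod p)
    (hmove : ∀ k, g • uCoset p (x + liftMulSelf p k) = uCoset p (x' + liftMulSelf p (φ k)))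
    (hphase : ∀ k, a' * φ k = a * k + b) :
    (Uline p x a).map (actL p g) = Uline p x' a' := by
  classical
  have hgen : wVec p x' a' = stdAddChar (-b) • actL p g (wVec p x a) := by
    funext c
    simp only [Pi.smul_apply, smul_eq_mul, actL_apply, wVec_apply, Finset.mul_sum,
      inv_smul_eq_iff, hmove, mul_ite, mul_zero]
    rw [← φ.sum_comp]
    refine Finset.sum_congr rfl fun k _ => ?_
    rw [← AddChar.map_add_eq_mul, hphase, neg_add, add_comm (-b)]
  rw [Uline, Uline, Submodule.map_span, Set.image_singleton, hgen,
    Submodule.span_singleton_smul_eq (stdAddChar_ne_zero _).isUnit]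

theorem Uline_add_natCast_self (x : ZMod (p ^ 2)) (a : ZMod p) :
    Uline p (x + (p : ZMod (p ^ 2))) a = Uline p x a := by
  have hmove (k : ZMod p) : (1 : PSLmod (p ^ 2)) • uCoset p (x + p + liftMulSelf p k) =
      uCoset p (x + liftMulSelf p (Equiv.addRight 1 k)) := by
    rw [one_smul, Equiv.coe_addRight, liftMulSelf_add, liftMulSelf_one, add_right_comm x,
      add_assoc]
  simpa [actL_one] using map_actL_Uline (Equiv.addRight 1) hmove (fun k => mul_add_one a k)

theorem map_actL_Tbar_Uline (x : ZMod (p ^ 2)) (a : ZMod p) :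
    (Uline p x a).map (actL p (Tbar p)) = Uline p (x + 1) a :=
  map_actL_Uline (b := 0) (Equiv.refl _)
    (fun k => by rw [Tbar_smul_uCoset, add_right_comm]; rfl) (fun k => (add_zero _).symm)

theorem map_actL_Sbar_Uline (x : ZMod (p ^ 2)) (a : ZMod p) (hx : IsUnit x) :
    (Uline p x a).map (actL p (Sbar p)) =
      Uline p (-x⁻¹) (a * (castHom (dvd_pow_self p (two_ne_zero)) (ZMod p) x) ^ 2) := by
  set xb := castHom (dvd_pow_self p (two_ne_zero)) (ZMod p) x
  have hxb : xb ≠ 0 := (hx.map _).ne_zero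
  have hinv : castHom (dvd_pow_self p (two_ne_zero)) (ZMod p) x⁻¹ = xb⁻¹ :=
    eq_inv_of_mul_eq_one_left (by rw [← map_mul, inv_mul_of_unit x hx, map_one])
  refine map_actL_Uline (b := 0) (Equiv.mulRight₀ (xb⁻¹ ^ 2) (by simpa using hxb))
    (fun k => Sbar_smul_uCoset ?_) (fun k => ?_)
  · have hx_mul : x * liftMulSelf p (k * xb⁻¹ ^ 2) = liftMulSelf p (xb⁻¹ * k) := by
      rw [mul_liftMulSelf]; congr 1; change xb * _ = _; field_simp
    have hinv_mul : x⁻¹ * liftMulSelf p k = liftMulSelf p (xb⁻¹ * k) := by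
      rw [mul_liftMulSelf, hinv]
    rw [Equiv.mulRight₀_apply]
    linear_combination -mul_inv_of_unit x hx + hx_mul - hinv_mul +
      liftMulSelf_mul_liftMulSelf k (k * xb⁻¹ ^ 2)
  · rw [Equiv.mulRight₀_apply, add_zero]
    field_simp

end Uline

theorem Uline_properties_general (p : ℕ) [Fact p.Prime] :
    (∀ (x : ZMod (p ^ 2)) (a : ZMod p), Uline p (x + (p : ZMod (p ^ 2))) a = Uline p x a) ∧
    (∀ (x : ZMod (p ^ 2)) (a : ZMod p),
      Submodule.map (actL p (Tbar p)) (Uline p x a) = Uline p (x + 1) a) ∧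
    (∀ (x : ZMod (p ^ 2)) (a : ZMod p), IsUnit x →
      Submodule.map (actL p (Sbar p)) (Uline p x a) =
        Uline p (-x⁻¹)
          (a * (ZMod.castHom (dvd_pow_self p (two_ne_zero)) (ZMod p) x) ^ 2)) :=
  ⟨Uline_add_natCast_self, map_actL_Tbar_Uline, map_actL_Sbar_Uline⟩

/-- `U_x^a` depends only on `x mod p`; `T` sends `U_x^a` to `U_{x+1}^a`; and for `x`
invertible, `S` sends `U_x^a` to `U_{−x⁻¹}^{a x²}` (where `x²` is taken mod `p`). -/
theorem Uline_properties (p : ℕ) [Fact p.Prime] (hodd : Odd p) :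
    (∀ (x : ZMod (p ^ 2)) (a : ZMod p), Uline p (x + (p : ZMod (p ^ 2))) a = Uline p x a) ∧
    (∀ (x : ZMod (p ^ 2)) (a : ZMod p),
      Submodule.map (actL p (Tbar p)) (Uline p x a) = Uline p (x + 1) a) ∧
    (∀ (x : ZMod (p ^ 2)) (a : ZMod p), IsUnit x →
      Submodule.map (actL p (Sbar p)) (Uline p x a) =
        Uline p (-x⁻¹)
          (a * (ZMod.castHom (dvd_pow_self p (two_ne_zero)) (ZMod p) x) ^ 2)) :=
  Uline_properties_general p
end
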